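/- arXiv:2605.17607 — 3 statements merged into one kernel-verified Lean document; each statement's English description precedes it below -/
import Mathlib

section
/- Define the symmetric Minty pairing M(β) = ∫_0^1 (β(c) - β*(c)) · (1 - c - (β(c)-c)/β'(c)) dc where β*(c) = (1+c)/2. For every k ∈ ℕ, the piecewise linear function β_k defined by β_k(c) = 1/2 + c/5 for c < 1/(k+2), β_k(c) = (5k+4)/(10(k+2)) + (4/5)c for 1/(k+2) ≤ c < 2/(k+2), and β_k(c) = (1+c)/2 for c ≥ 2/(k+2), is continuous, satisfies β_k(1) = 1, has β_k' ≥ 1/5 a.e., and satisfies M(β_k) > 0. -/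
open MeasureTheory

/-- The piecewise-linear perturbation `β_k` of the BNE `β*(c) = (1+c)/2`. -/
noncomputable def betaK (k : ℕ) (c : ℝ) : ℝ :=
  if c < 1 / ((k : ℝ) + 2) then 1 / 2 + c / 5
  else if c < 2 / ((k : ℝ) + 2) then (5 * (k : ℝ) + 4) / (10 * ((k : ℝ) + 2)) + (4 / 5) * c
  else (1 + c) / 2

/-- The symmetric Minty pairing of `β` against the BNE `β*(c) = (1+c)/2`. -/
noncomputable def mintyPairing (β : ℝ → ℝ) : ℝ :=
  ∫ c in (0 : ℝ)..1, (β c - (1 + c) / 2) * (1 - c - (β c - c) / deriv β c)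

/-!
On `(0, t)`, `(t, 2t)` and `(2t, 1)` the bid `β_t` is affine with slopes `1/5`, `4/5`, `1/2`,
and on the last piece it equals `β*`. Hence the Minty integrand is a quadratic on the first two
pieces and vanishes on the third, and integrating gives `M(β_t) = t² (27 - 42 t) / 160`, which is
positive for `t ≤ 1/2`. The kinks form a null set, so they affect neither the integral nor the
a.e. bound `β_t' ≥ 1/5`.
-/

open Set Filter Topology

theorem integral_quadratic (p q r a b : ℝ) :
    ∫ x in a..b, (p * x ^ 2 + q * x + r) =
      p * (b ^ 3 - a ^ 3) / 3 + q * (b ^ 2 - a ^ 2) / 2 + r * (b - a) := by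
  have hF (x : ℝ) : HasDerivAt (fun x => p * x ^ 3 / 3 + q * x ^ 2 / 2 + r * x)
      (p * x ^ 2 + q * x + r) x :=
    ((((hasDerivAt_pow 3 x).const_mul p).div_const 3).add
      (((hasDerivAt_pow 2 x).const_mul q).div_const 2)).add
      ((hasDerivAt_id' x).const_mul r) |>.congr_deriv (by push_cast; ring)
  rw [intervalIntegral.integral_eq_sub_of_hasDerivAt (fun x _ => hF x)
    ((by fun_prop : Continuous _).intervalIntegrable _ _)]
  ring

section EqOnIoo

variable {f g : ℝ → ℝ} {a b : ℝ}

theorem intervalIntegrable_of_eqOn_Ioo (hab : a ≤ b) (hg : IntervalIntegrable g volume a b)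
    (h : EqOn f g (Ioo a b)) : IntervalIntegrable f volume a b := by
  rw [intervalIntegrable_iff_integrableOn_Ioc_of_le hab,
    integrableOn_Ioc_iff_integrableOn_Ioo] at hg ⊢
  exact hg.congr_fun h.symm measurableSet_Ioo

theorem integral_eq_of_eqOn_Ioo (hab : a ≤ b) (h : EqOn f g (Ioo a b)) :
    ∫ x in a..b, f x = ∫ x in a..b, g x := by
  rw [intervalIntegral.integral_of_le hab, intervalIntegral.integral_of_le hab,
    integral_Ioc_eq_integral_Ioo, integral_Ioc_eq_integral_Ioo]
  exact setIntegral_congr_fun measurableSet_Ioo h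

end EqOnIoo

theorem deriv_eq_of_eventuallyEq_affine {f : ℝ → ℝ} {a b c : ℝ}
    (h : f =ᶠ[𝓝 c] fun x => a + b * x) : deriv f c = b := by
  rw [h.deriv_eq]
  simp

noncomputable def mintyIntegrand (β : ℝ → ℝ) (c : ℝ) : ℝ :=
  (β c - (1 + c) / 2) * (1 - c - (β c - c) / deriv β c)

theorem mintyPairing_eq_integral (β : ℝ → ℝ) :
    mintyPairing β = ∫ c in (0 : ℝ)..1, mintyIntegrand β c := rfl

theorem mintyIntegrand_of_eventuallyEq_affine {β : ℝ → ℝ} {a b c : ℝ}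
    (h : β =ᶠ[𝓝 c] fun x => a + b * x) :
    mintyIntegrand β c = (a + b * c - (1 + c) / 2) * (1 - c - (a + b * c - c) / b) := by
  rw [mintyIntegrand, deriv_eq_of_eventuallyEq_affine h, h.eq_of_nhds]

/-- The family `β_k` reparametrised by its first kink `t = 1 / (k + 2)`; the second is at `2 t`. -/
noncomputable def kinkedBid (t c : ℝ) : ℝ :=
  if c < t then 1 / 2 + 1 / 5 * c
  else if c < 2 * t then (1 / 2 - 3 / 5 * t) + 4 / 5 * c
  else 1 / 2 + 1 / 2 * c

theorem betaK_eq_kinkedBid (k : ℕ) : betaK k = kinkedBid (1 / ((k : ℝ) + 2)) := by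
  funext c
  have hk : (k : ℝ) + 2 ≠ 0 := by positivity
  simp only [betaK, kinkedBid, mul_one_div]
  congr 2
  · ring
  · congr 1
    field_simp
    ring
  · ring

namespace kinkedBid

variable {t c : ℝ}

theorem continuous (ht : 0 ≤ t) : Continuous (kinkedBid t) := by
  refine Continuous.if (fun c hc => ?_) (by fun_prop)
    (Continuous.if (fun c hc => ?_) (by fun_prop) (by fun_prop))
  · rw [show {x : ℝ | x < t} = Iio t from rfl, frontier_Iio, mem_singleton_iff] at hc
    subst hc
    split_ifs <;> linarith
  · rw [show {x : ℝ | x < 2 * t} = Iio (2 * t) from rfl, frontier_Iio, mem_singleton_iff] at hc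
    subst hc
    ring

theorem apply_one (ht : 2 * t ≤ 1) : kinkedBid t 1 = 1 := by
  rw [kinkedBid, if_neg (by linarith), if_neg (by linarith)]
  norm_num

theorem eventuallyEq_of_lt (h : c < t) : kinkedBid t =ᶠ[𝓝 c] fun x => 1 / 2 + 1 / 5 * x :=
  eventually_of_mem (Iio_mem_nhds h) fun _ hx => if_pos hx

theorem eventuallyEq_of_mem_Ioo (h : c ∈ Ioo t (2 * t)) :
    kinkedBid t =ᶠ[𝓝 c] fun x => (1 / 2 - 3 / 5 * t) + 4 / 5 * x :=
  eventually_of_mem (Ioo_mem_nhds h.1 h.2) fun _ hx => by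
    rw [kinkedBid, if_neg hx.1.not_gt, if_pos hx.2]

theorem eventuallyEq_of_gt (ht : 0 ≤ t) (h : 2 * t < c) :
    kinkedBid t =ᶠ[𝓝 c] fun x => 1 / 2 + 1 / 2 * x :=
  eventually_of_mem (Ioi_mem_nhds h) fun x hx => by
    rw [kinkedBid, if_neg (by simp only [mem_Ioi] at hx; linarith), if_neg hx.not_gt]

theorem one_fifth_le_deriv (ht : 0 ≤ t) (h₁ : c ≠ t) (h₂ : c ≠ 2 * t) :
    1 / 5 ≤ deriv (kinkedBid t) c := by
  rcases h₁.lt_or_gt with hlt | hgt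
  · rw [deriv_eq_of_eventuallyEq_affine (eventuallyEq_of_lt hlt)]
  rcases h₂.lt_or_gt with hlt' | hgt'
  · rw [deriv_eq_of_eventuallyEq_affine (eventuallyEq_of_mem_Ioo ⟨hgt, hlt'⟩)]
    norm_num
  · rw [deriv_eq_of_eventuallyEq_affine (eventuallyEq_of_gt ht hgt')]
    norm_num

theorem ae_one_fifth_le_deriv (ht : 0 ≤ t) : ∀ᵐ c, 1 / 5 ≤ deriv (kinkedBid t) c := by
  filter_upwards [Measure.ae_ne volume t, Measure.ae_ne volume (2 * t)] with c h₁ h₂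
  exact one_fifth_le_deriv ht h₁ h₂

theorem mintyPairing_eq (ht : 0 < t) (ht₁ : 2 * t ≤ 1) :
    mintyPairing (kinkedBid t) = t ^ 2 * (27 - 42 * t) / 160 := by
  have h₁ : EqOn (mintyIntegrand (kinkedBid t)) (fun c => -(9 / 10) * c ^ 2 + 9 / 20 * c + 0)
      (Ioo 0 t) := fun c hc => by
    rw [mintyIntegrand_of_eventuallyEq_affine (eventuallyEq_of_lt hc.2)]
    ring
  have h₂ : EqOn (mintyIntegrand (kinkedBid t))
      (fun c => -(9 / 40) * c ^ 2 + (9 / 80 + 27 / 40 * t) * c + -(9 / 40 * t + 9 / 20 * t ^ 2))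
      (Ioo t (2 * t)) := fun c hc => by
    rw [mintyIntegrand_of_eventuallyEq_affine (eventuallyEq_of_mem_Ioo hc)]
    ring
  have h₃ : EqOn (mintyIntegrand (kinkedBid t)) (fun _ => 0) (Ioo (2 * t) 1) := fun c hc => by
    rw [mintyIntegrand_of_eventuallyEq_affine (eventuallyEq_of_gt ht.le hc.1)]
    ring
  have ht₂ : t ≤ 2 * t := by linarith
  have hi₁ :=
    intervalIntegrable_of_eqOn_Ioo ht.le (Continuous.intervalIntegrable (by fun_prop) _ _) h₁
  have hi₂ :=
    intervalIntegrable_of_eqOn_Ioo ht₂ (Continuous.intervalIntegrable (by fun_prop) _ _) h₂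
  have hi₃ := intervalIntegrable_of_eqOn_Ioo ht₁ intervalIntegrable_const h₃
  rw [mintyPairing_eq_integral,
    ← intervalIntegral.integral_add_adjacent_intervals (hi₁.trans hi₂) hi₃,
    ← intervalIntegral.integral_add_adjacent_intervals hi₁ hi₂,
    integral_eq_of_eqOn_Ioo ht.le h₁, integral_eq_of_eqOn_Ioo ht₂ h₂,
    integral_eq_of_eqOn_Ioo ht₁ h₃, integral_quadratic, integral_quadratic,
    intervalIntegral.integral_zero]
  ring

end kinkedBid

/-- Each `β_k` is continuous, satisfies `β_k 1 = 1`, has `β_k' ≥ 1/5` a.e. on `[0,1]`,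
and has strictly positive Minty pairing against `β*`. -/
theorem stmt4 (k : ℕ) :
    Continuous (betaK k) ∧
    betaK k 1 = 1 ∧
    (∀ᵐ c, c ∈ Set.Icc (0 : ℝ) 1 → 1 / 5 ≤ deriv (betaK k) c) ∧
    0 < mintyPairing (betaK k) := by
  set t : ℝ := 1 / ((k : ℝ) + 2) with ht_def
  have ht : 0 < t := by positivity
  have ht₁ : 2 * t ≤ 1 := by
    rw [ht_def, mul_one_div, div_le_one (by positivity)]
    linarith [(Nat.cast_nonneg k : (0 : ℝ) ≤ k)]
  rw [betaK_eq_kinkedBid, ← ht_def]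
  refine ⟨kinkedBid.continuous ht.le, kinkedBid.apply_one ht₁,
    (kinkedBid.ae_one_fifth_le_deriv ht.le).mono fun _ h _ => h, ?_⟩
  rw [kinkedBid.mintyPairing_eq ht ht₁]
  have : 0 < 27 - 42 * t := by linarith
  positivity
end

section
/- Since the Minty variational inequality fails at the unique Nash equilibrium, the game gradient operator of the symmetric Bertrand duopoly is not monotone: there exist admissible strategies β, β̃ such that ∫_0^1 (β(c)-β̃(c)) · [(1-c-(β(c)-c)/β'(c)) - (1-c-(β̃(c)-c)/β̃'(c))] dc > 0. -/
open MeasureTheory Set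

/-!
At the equilibrium `β* c = (1 + c) / 2` the marginal utility `V β*` vanishes identically, so the
monotonicity pairing of `β` with `β*` is `∫₀¹ (β - β*) · V β`. For the quadratic bid
`β c = 1/2 + c/10 + 2c²/5` this integrand is `(8/5) c (1-c)² (1-3c) / (1+8c)`, which is positive
on `(0, 1/3)`; its integral is `(8/5) (749/12288 - 891/32768 · log 9)`, positive because
`log 9 = 3 log 2 + log (9/8) < 2.21`.
-/

/-- The symmetric marginal utility `V β`. -/
noncomputable def bertrandGradient (β : ℝ → ℝ) (c : ℝ) : ℝ :=
  1 - c - (β c - c) / deriv β c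

/-- The admissible set `𝓑_δ`. -/
def IsAdmissibleBid (δ : ℝ) (β : ℝ → ℝ) : Prop :=
  ContinuousOn β (Icc 0 1) ∧ (∀ c ∈ Icc (0 : ℝ) 1, β c ∈ Icc (0 : ℝ) 1) ∧ β 1 = 1 ∧
    ∀ᵐ c, c ∈ Icc (0 : ℝ) 1 → δ ≤ deriv β c

lemma IsAdmissibleBid.of_hasDerivAt {δ : ℝ} {β β' : ℝ → ℝ} (hδ : 0 ≤ δ)
    (hβ : ∀ c, HasDerivAt β (β' c) c) (hβ' : ∀ c ∈ Icc (0 : ℝ) 1, δ ≤ β' c)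
    (h₀ : 0 ≤ β 0) (h₁ : β 1 = 1) : IsAdmissibleBid δ β := by
  have hcont : ContinuousOn β (Icc 0 1) := fun c _ ↦ (hβ c).continuousAt.continuousWithinAt
  have hmono : MonotoneOn β (Icc 0 1) := by
    exact monotoneOn_of_hasDerivWithinAt_nonneg (convex_Icc 0 1) hcont
      (fun c _ ↦ (hβ c).hasDerivWithinAt) fun c hc ↦ hδ.trans (hβ' c (interior_subset hc))
  refine ⟨hcont, fun c hc ↦ ⟨?_, ?_⟩, h₁, ae_of_all _ fun c hc ↦ (hβ c).deriv ▸ hβ' c hc⟩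
  · exact h₀.trans (hmono (left_mem_Icc.2 zero_le_one) hc hc.1)
  · exact h₁ ▸ hmono hc (right_mem_Icc.2 zero_le_one) hc.2

noncomputable def equilibriumBid (c : ℝ) : ℝ := (1 + c) / 2

lemma hasDerivAt_equilibriumBid (c : ℝ) : HasDerivAt equilibriumBid (1 / 2) c :=
  (((hasDerivAt_id c).const_add 1).div_const 2).congr_deriv (by norm_num)

lemma bertrandGradient_equilibriumBid (c : ℝ) : bertrandGradient equilibriumBid c = 0 := by
  rw [bertrandGradient, (hasDerivAt_equilibriumBid c).deriv, equilibriumBid]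
  ring

lemma isAdmissibleBid_equilibriumBid : IsAdmissibleBid (1 / 10) equilibriumBid :=
  .of_hasDerivAt (by norm_num) hasDerivAt_equilibriumBid (fun _ _ ↦ by norm_num)
    (by norm_num [equilibriumBid]) (by norm_num [equilibriumBid])

noncomputable def deviationBid (c : ℝ) : ℝ := 1 / 2 + c / 10 + 2 / 5 * c ^ 2

lemma hasDerivAt_deviationBid (c : ℝ) : HasDerivAt deviationBid ((1 + 8 * c) / 10) c := by
  have h := ((hasDerivAt_id c).div_const 10).const_add (1 / 2) |>.add
    ((hasDerivAt_pow 2 c).const_mul (2 / 5 : ℝ))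
  exact h.congr_deriv (by push_cast; ring)

lemma isAdmissibleBid_deviationBid : IsAdmissibleBid (1 / 10) deviationBid :=
  .of_hasDerivAt (by norm_num) hasDerivAt_deviationBid (fun c hc ↦ by linarith [hc.1])
    (by norm_num [deviationBid]) (by norm_num [deviationBid])

lemma deviation_pairing_eq {c : ℝ} (hc : 1 + 8 * c ≠ 0) :
    (deviationBid c - equilibriumBid c) *
        (bertrandGradient deviationBid c - bertrandGradient equilibriumBid c) =
      8 / 5 * (c * (1 - c) ^ 2 * (1 - 3 * c)) / (1 + 8 * c) := by
  rw [bertrandGradient_equilibriumBid, bertrandGradient, (hasDerivAt_deviationBid c).deriv,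
    deviationBid, equilibriumBid]
  have hc' : 1 + c * 8 ≠ 0 := by rwa [mul_comm]
  field_simp
  ring

-- Divide `c (1-c)² (1-3c)` by `1 + 8c`: the quotient gives the polynomial part, the remainder
-- `-891/4096` the logarithm.
noncomputable def deviationPairingPrimitive (c : ℝ) : ℝ :=
  8 / 5 * (-3 / 32 * c ^ 4 + 59 / 192 * c ^ 3 - 379 / 1024 * c ^ 2 + 891 / 4096 * c
    - 891 / 32768 * Real.log (1 + 8 * c))

lemma hasDerivAt_deviationPairingPrimitive {c : ℝ} (hc : 1 + 8 * c ≠ 0) :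
    HasDerivAt deviationPairingPrimitive
      (8 / 5 * (c * (1 - c) ^ 2 * (1 - 3 * c)) / (1 + 8 * c)) c := by
  have hlin : HasDerivAt (fun c : ℝ ↦ 1 + 8 * c) 8 c := by
    simpa using ((hasDerivAt_id c).const_mul (8 : ℝ)).const_add 1
  have hpoly := (((hasDerivAt_pow 4 c).const_mul (-3 / 32 : ℝ)).add
    ((hasDerivAt_pow 3 c).const_mul (59 / 192 : ℝ))).sub
    ((hasDerivAt_pow 2 c).const_mul (379 / 1024 : ℝ)) |>.add
    ((hasDerivAt_id c).const_mul (891 / 4096 : ℝ))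
  refine ((hpoly.sub ((hlin.log hc).const_mul (891 / 32768 : ℝ))).const_mul
    (8 / 5 : ℝ)).congr_deriv ?_
  push_cast
  field_simp
  ring

lemma log_nine_lt : Real.log 9 < 2.21 := by
  have hsplit : Real.log 9 = 3 * Real.log 2 + Real.log (9 / 8) := by
    rw [← Real.log_rpow two_pos, ← Real.log_mul (by positivity) (by norm_num)]
    norm_num
  have h98 : Real.log (9 / 8) < 9 / 8 - 1 := Real.log_lt_sub_one_of_pos (by norm_num) (by norm_num)
  linarith [Real.log_two_lt_d9]

lemma integral_deviation_pairing_pos :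
    0 < ∫ c in (0 : ℝ)..1, (deviationBid c - equilibriumBid c) *
        (bertrandGradient deviationBid c - bertrandGradient equilibriumBid c) := by
  have hne : ∀ c ∈ uIcc (0 : ℝ) 1, 1 + 8 * c ≠ 0 := fun c hc ↦ by
    rw [uIcc_of_le zero_le_one] at hc
    linarith [hc.1]
  have hint : IntervalIntegrable
      (fun c : ℝ ↦ 8 / 5 * (c * (1 - c) ^ 2 * (1 - 3 * c)) / (1 + 8 * c)) volume 0 1 :=
    (ContinuousOn.div (by fun_prop) (by fun_prop) hne).intervalIntegrable
  rw [intervalIntegral.integral_congr fun c hc ↦ deviation_pairing_eq (hne c hc),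
    intervalIntegral.integral_eq_sub_of_hasDerivAt
      (fun c hc ↦ hasDerivAt_deviationPairingPrimitive (hne c hc)) hint]
  have hvalue : deviationPairingPrimitive 1 - deviationPairingPrimitive 0 =
      8 / 5 * (749 / 12288 - 891 / 32768 * Real.log 9) := by
    norm_num [deviationPairingPrimitive]
  linarith [log_nine_lt]

/-- The game gradient operator of the symmetric Bertrand duopoly with uniform
costs is not monotone: there exist admissible strategies `β`, `β̃` (continuous,
`[0,1]`-valued, equal to `1` at `1`, with derivative bounded below by some `δ > 0`
almost everywhere) such that
`∫_0^1 (β - β̃)·[(1 - c - (β-c)/β') - (1 - c - (β̃-c)/β̃')] dc > 0`. -/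
theorem stmt6 :
    ∃ δ > (0 : ℝ), ∃ β βt : ℝ → ℝ,
      (ContinuousOn β (Set.Icc (0 : ℝ) 1) ∧
        (∀ c ∈ Set.Icc (0 : ℝ) 1, β c ∈ Set.Icc (0 : ℝ) 1) ∧ β 1 = 1 ∧
        (∀ᵐ c, c ∈ Set.Icc (0 : ℝ) 1 → δ ≤ deriv β c)) ∧
      (ContinuousOn βt (Set.Icc (0 : ℝ) 1) ∧
        (∀ c ∈ Set.Icc (0 : ℝ) 1, βt c ∈ Set.Icc (0 : ℝ) 1) ∧ βt 1 = 1 ∧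
        (∀ᵐ c, c ∈ Set.Icc (0 : ℝ) 1 → δ ≤ deriv βt c)) ∧
      0 < ∫ c in (0 : ℝ)..1, (β c - βt c) *
        ((1 - c - (β c - c) / deriv β c) - (1 - c - (βt c - c) / deriv βt c)) :=
  ⟨1 / 10, by norm_num, deviationBid, equilibriumBid, isAdmissibleBid_deviationBid,
    isAdmissibleBid_equilibriumBid, integral_deviation_pairing_pos⟩
end

section
/- Let δ ∈ (0, 1/2], B = {x ∈ ℝ² : x₁ ≥ δ, x₂ ≥ δ, x₁ + x₂ ≤ 2}, L(x) = 26(x₁-1/2)² + 10(x₂-1/2)², and v the Bertrand game gradient v₁(x) = -7/48 - 3x₂/(48x₁) + 5/(48x₁), v₂(x) = -1/3 - x₂/(8x₁) + 3/(16x₁) + 1/(24x₂). Then there exists w > 0 such that for all x ∈ B, ⟨∇L(x), v(x)⟩ ≤ -w·‖x - (1/2,1/2)‖². -/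
/-!
Clearing denominators, `x₁ x₂ ⟨∇L(x), v(x)⟩` is a cubic that splits as
`g₀ σ₀ + x₁ σ₁ + x₂ σ₂` with `g₀ = 2 - x₁ - x₂ ≥ 0`, `σ₀ = -(x₁ - x₂)² / 9 ≤ 0`, and `σ₁`, `σ₂`
negative definite quadratic forms in `y = x - (1/2, 1/2)`, both bounded by `-‖y‖² / 20`.
Hence `x₁ x₂ ⟨∇L, v⟩ ≤ -(x₁ + x₂) ‖y‖² / 20`, and `2 x₁ x₂ ≤ x₁ + x₂` on the simplex
`x₁ + x₂ ≤ 2` lets us divide by `x₁ x₂`, giving `w = 1/10` uniformly in `δ`.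
-/

noncomputable section

def bertrandField₁ (x₁ x₂ : ℝ) : ℝ := -7 / 48 - 3 * x₂ / (48 * x₁) + 5 / (48 * x₁)

def bertrandField₂ (x₁ x₂ : ℝ) : ℝ :=
  -1 / 3 - x₂ / (8 * x₁) + 3 / (16 * x₁) + 1 / (24 * x₂)

def lyapunovDerivative (x₁ x₂ : ℝ) : ℝ :=
  52 * (x₁ - 1 / 2) * bertrandField₁ x₁ x₂ + 20 * (x₂ - 1 / 2) * bertrandField₂ x₁ x₂

def quadForm₁ (y₁ y₂ : ℝ) : ℝ := ((y₁ + y₂) ^ 2 + 11 * y₂ ^ 2) / 9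

def quadForm₂ (y₁ y₂ : ℝ) : ℝ := 29 / 4 * y₁ ^ 2 + 305 / 36 * y₁ * y₂ + 47 / 18 * y₂ ^ 2

end

theorem sq_add_sq_div_twenty_le_quadForm₁ (y₁ y₂ : ℝ) :
    (y₁ ^ 2 + y₂ ^ 2) / 20 ≤ quadForm₁ y₁ y₂ := by
  unfold quadForm₁
  nlinarith [sq_nonneg (y₁ + 2 * y₂), sq_nonneg y₁, sq_nonneg y₂]

theorem sq_add_sq_div_twenty_le_quadForm₂ (y₁ y₂ : ℝ) :
    (y₁ ^ 2 + y₂ ^ 2) / 20 ≤ quadForm₂ y₁ y₂ := by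
  unfold quadForm₂
  nlinarith [sq_nonneg (5 * y₁ + 3 * y₂), sq_nonneg y₁, sq_nonneg y₂]

/- Here `σᵢ = -quadFormᵢ`. Such splittings form a two-parameter family, in which `σ₀` is never
definite; this member makes the top eigenvalues of `σ₁`, `σ₂` nearly minimal (about `-0.101`). -/
theorem mul_lyapunovDerivative_eq {x₁ x₂ : ℝ} (hx₁ : x₁ ≠ 0) (hx₂ : x₂ ≠ 0) :
    x₁ * x₂ * lyapunovDerivative x₁ x₂ =
      -((2 - x₁ - x₂) * (x₁ - x₂) ^ 2 / 9) - x₁ * quadForm₁ (x₁ - 1 / 2) (x₂ - 1 / 2)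
        - x₂ * quadForm₂ (x₁ - 1 / 2) (x₂ - 1 / 2) := by
  unfold lyapunovDerivative bertrandField₁ bertrandField₂ quadForm₁ quadForm₂
  field_simp
  ring

theorem two_mul_mul_le_add {x₁ x₂ : ℝ} (hsum : x₁ + x₂ ≤ 2) (hnonneg : 0 ≤ x₁ + x₂) :
    2 * (x₁ * x₂) ≤ x₁ + x₂ := by
  nlinarith [sq_nonneg (x₁ - x₂)]

theorem mul_lyapunovDerivative_le {x₁ x₂ : ℝ} (hx₁ : 0 < x₁) (hx₂ : 0 < x₂)
    (hsum : x₁ + x₂ ≤ 2) :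
    x₁ * x₂ * lyapunovDerivative x₁ x₂ ≤
      -((x₁ + x₂) * ((x₁ - 1 / 2) ^ 2 + (x₂ - 1 / 2) ^ 2) / 20) := by
  have hσ₀ : 0 ≤ (2 - x₁ - x₂) * (x₁ - x₂) ^ 2 / 9 := by
    have : 0 ≤ 2 - x₁ - x₂ := by linarith
    positivity
  have hσ₁ := mul_le_mul_of_nonneg_left
    (sq_add_sq_div_twenty_le_quadForm₁ (x₁ - 1 / 2) (x₂ - 1 / 2)) hx₁.le
  have hσ₂ := mul_le_mul_of_nonneg_left
    (sq_add_sq_div_twenty_le_quadForm₂ (x₁ - 1 / 2) (x₂ - 1 / 2)) hx₂.le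
  rw [mul_lyapunovDerivative_eq hx₁.ne' hx₂.ne']
  linarith

theorem lyapunovDerivative_le {x₁ x₂ : ℝ} (hx₁ : 0 < x₁) (hx₂ : 0 < x₂) (hsum : x₁ + x₂ ≤ 2) :
    lyapunovDerivative x₁ x₂ ≤ -(1 / 10) * ((x₁ - 1 / 2) ^ 2 + (x₂ - 1 / 2) ^ 2) := by
  set r := (x₁ - 1 / 2) ^ 2 + (x₂ - 1 / 2) ^ 2
  have hr : 0 ≤ r := by positivity
  have hamgm := mul_le_mul_of_nonneg_right (two_mul_mul_le_add hsum (by linarith)) hr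
  refine le_of_mul_le_mul_left ?_ (mul_pos hx₁ hx₂)
  calc x₁ * x₂ * lyapunovDerivative x₁ x₂ ≤ -((x₁ + x₂) * r / 20) :=
        mul_lyapunovDerivative_le hx₁ hx₂ hsum
    _ ≤ x₁ * x₂ * (-(1 / 10) * r) := by linarith

theorem stmt13_general (δ : ℝ) (hδ0 : 0 < δ) :
    ∃ w > (0 : ℝ), ∀ x₁ x₂ : ℝ, δ ≤ x₁ → δ ≤ x₂ → x₁ + x₂ ≤ 2 →
      (52 * (x₁ - 1 / 2)) * (-7 / 48 - 3 * x₂ / (48 * x₁) + 5 / (48 * x₁)) +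
        (20 * (x₂ - 1 / 2)) * (-1 / 3 - x₂ / (8 * x₁) + 3 / (16 * x₁) + 1 / (24 * x₂)) ≤
      -w * ((x₁ - 1 / 2) ^ 2 + (x₂ - 1 / 2) ^ 2) :=
  ⟨1 / 10, by norm_num, fun _ _ h₁ h₂ hsum =>
    lyapunovDerivative_le (hδ0.trans_le h₁) (hδ0.trans_le h₂) hsum⟩

/-- Strict Lyapunov decrease: for `δ ∈ (0,1/2]` there is `w > 0` such that on the
feasible set `B = {x : x₁ ≥ δ, x₂ ≥ δ, x₁ + x₂ ≤ 2}`,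
`⟨∇L(x), v(x)⟩ ≤ -w‖x - (1/2,1/2)‖²` for `L(x) = 26(x₁-1/2)² + 10(x₂-1/2)²` and the
Bertrand game gradient `v`. -/
theorem stmt13 (δ : ℝ) (hδ0 : 0 < δ) (hδ : δ ≤ 1 / 2) :
    ∃ w > (0 : ℝ), ∀ x₁ x₂ : ℝ, δ ≤ x₁ → δ ≤ x₂ → x₁ + x₂ ≤ 2 →
      (52 * (x₁ - 1 / 2)) * (-7 / 48 - 3 * x₂ / (48 * x₁) + 5 / (48 * x₁)) +
        (20 * (x₂ - 1 / 2)) * (-1 / 3 - x₂ / (8 * x₁) + 3 / (16 * x₁) + 1 / (24 * x₂)) ≤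
      -w * ((x₁ - 1 / 2) ^ 2 + (x₂ - 1 / 2) ^ 2) :=
  stmt13_general δ hδ0
end
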